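/- arXiv:1211.0459 — 3 statements merged into one kernel-verified Lean document; each statement's English description precedes it below -/
import Mathlib

section
/- Let A be a p×p matrix partitioned into blocks A_{gh} of sizes p_g × p_h where p_1 + ... + p_G = p. Let N(A) be the G×G matrix whose (g,h) entry is the spectral norm ‖A_{gh}‖. Then the spectral norm of A is at most the spectral norm of N(A): ‖A‖ ≤ ‖N(A)‖. -/
/-!
Split `x` into its blocks `x_h`. The `g`-th block of `A x` is `∑ h, A_{gh} x_h`, of norm at most
`∑ h, ‖A_{gh}‖ ‖x_h‖ = (N(A) ξ)_g`, where `ξ = (‖x_h‖)_h` has `‖ξ‖ = ‖x‖`. The Euclidean norm is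
monotone in the moduli of the coordinates, so `‖A x‖ ≤ ‖N(A) ξ‖ ≤ ‖N(A)‖ ‖x‖`.
-/

open scoped Matrix.Norms.L2Operator

/-- The `(g, h)` block of a matrix indexed by a sigma type encoding a
regular partition with block sizes `p 0, ..., p (G-1)`. -/
noncomputable def blockOf {G : ℕ} (p : Fin G → ℕ)
    (A : Matrix ((g : Fin G) × Fin (p g)) ((g : Fin G) × Fin (p g)) ℝ)
    (g h : Fin G) : Matrix (Fin (p g)) (Fin (p h)) ℝ :=
  Matrix.of fun i j => A ⟨g, i⟩ ⟨h, j⟩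

open WithLp

theorem PiLp.norm_le_norm_of_forall_norm_apply_le {ι : Type*} [Fintype ι] {β γ : ι → Type*}
    [∀ i, SeminormedAddCommGroup (β i)] [∀ i, SeminormedAddCommGroup (γ i)]
    {x : PiLp 2 β} {y : PiLp 2 γ} (h : ∀ i, ‖x i‖ ≤ ‖y i‖) : ‖x‖ ≤ ‖y‖ := by
  simp only [norm_eq_of_L2]
  gcongr with i
  exact h i

namespace EuclideanSpace

variable {𝕜 : Type*} {ι : Type*} {m : ι → Type*}

def block (x : EuclideanSpace 𝕜 (Σ i, m i)) (i : ι) : EuclideanSpace 𝕜 (m i) :=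
  toLp 2 fun a => x ⟨i, a⟩

variable [RCLike 𝕜] [Fintype ι] [∀ i, Fintype (m i)]

theorem norm_sq_eq_sum_norm_block_sq (x : EuclideanSpace 𝕜 (Σ i, m i)) :
    ‖x‖ ^ 2 = ∑ i, ‖x.block i‖ ^ 2 := by
  simp only [PiLp.norm_sq_eq_of_L2, block, Fintype.sum_sigma]

theorem norm_toLp_norm_block (x : EuclideanSpace 𝕜 (Σ i, m i)) :
    ‖(toLp 2 fun i => ‖x.block i‖ : EuclideanSpace ℝ ι)‖ = ‖x‖ := by
  rw [← sq_eq_sq₀ (norm_nonneg _) (norm_nonneg _), norm_sq_eq_sum_norm_block_sq,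
    PiLp.norm_sq_eq_of_L2]
  simp only [norm_norm]

end EuclideanSpace

namespace Matrix

variable {𝕜 : Type*} [RCLike 𝕜] {ι ι' : Type*} {m : ι → Type*} {n : ι' → Type*}
  [Fintype ι'] [∀ j, Fintype (n j)]

theorem mulVec_comp_sigma_mk (A : Matrix (Σ i, m i) (Σ j, n j) 𝕜) (x : (Σ j, n j) → 𝕜) (i : ι) :
    (A *ᵥ x) ∘ Sigma.mk i =
      ∑ j, A.submatrix (Sigma.mk i) (Sigma.mk j) *ᵥ fun b => x ⟨j, b⟩ := by
  funext a
  simp only [Function.comp_apply, mulVec, dotProduct, Finset.sum_apply, Fintype.sum_sigma,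
    submatrix_apply]

variable [∀ i, Fintype (m i)] [∀ j, DecidableEq (n j)]

noncomputable def normCompression (A : Matrix (Σ i, m i) (Σ j, n j) 𝕜) : Matrix ι ι' ℝ :=
  of fun i j => ‖A.submatrix (Sigma.mk i) (Sigma.mk j)‖

theorem norm_block_mulVec_le (A : Matrix (Σ i, m i) (Σ j, n j) 𝕜)
    (x : EuclideanSpace 𝕜 (Σ j, n j)) (i : ι) :
    ‖EuclideanSpace.block (toLp 2 (A *ᵥ x)) i‖ ≤
      ∑ j, ‖A.submatrix (Sigma.mk i) (Sigma.mk j)‖ * ‖x.block j‖ :=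
  calc ‖EuclideanSpace.block (toLp 2 (A *ᵥ x)) i‖
      = ‖∑ j, toLp 2 (A.submatrix (Sigma.mk i) (Sigma.mk j) *ᵥ x.block j)‖ := by
        rw [EuclideanSpace.block, ← WithLp.toLp_sum]
        exact congrArg (‖toLp 2 ·‖) (mulVec_comp_sigma_mk A x i)
    _ ≤ ∑ j, ‖toLp 2 (A.submatrix (Sigma.mk i) (Sigma.mk j) *ᵥ x.block j)‖ := norm_sum_le _ _
    _ ≤ _ := Finset.sum_le_sum fun j _ => l2_opNorm_mulVec _ _

variable [Fintype ι] [DecidableEq ι']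

theorem norm_mulVec_le_norm_normCompression_mul (A : Matrix (Σ i, m i) (Σ j, n j) 𝕜)
    (x : EuclideanSpace 𝕜 (Σ j, n j)) :
    ‖toLp 2 (A *ᵥ x)‖ ≤ ‖A.normCompression‖ * ‖x‖ := by
  set ξ : EuclideanSpace ℝ ι' := toLp 2 fun j => ‖x.block j‖
  have hξ : ‖ξ‖ = ‖x‖ := EuclideanSpace.norm_toLp_norm_block x
  calc ‖toLp 2 (A *ᵥ x)‖ ≤ ‖toLp 2 (A.normCompression *ᵥ ξ)‖ := by
        rw [← EuclideanSpace.norm_toLp_norm_block]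
        refine PiLp.norm_le_norm_of_forall_norm_apply_le fun i => ?_
        rw [PiLp.toLp_apply, norm_norm]
        calc _ ≤ ∑ j, ‖A.submatrix (Sigma.mk i) (Sigma.mk j)‖ * ‖x.block j‖ :=
              norm_block_mulVec_le A x i
          _ = (A.normCompression *ᵥ ξ) i := rfl
          _ ≤ _ := Real.le_norm_self _
    _ ≤ ‖A.normCompression‖ * ‖ξ‖ := l2_opNorm_mulVec _ _
    _ = ‖A.normCompression‖ * ‖x‖ := by rw [hξ]

theorem l2_opNorm_le_norm_normCompression (A : Matrix (Σ i, m i) (Σ j, n j) 𝕜) :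
    ‖A‖ ≤ ‖A.normCompression‖ :=
  ContinuousLinearMap.opNorm_le_bound _ (norm_nonneg _) (norm_mulVec_le_norm_normCompression_mul A)

end Matrix

/-- Norm compression inequality: the spectral norm of a matrix is bounded by
the spectral norm of the matrix of spectral norms of its regular blocks. -/
theorem norm_compression_inequality {G : ℕ} (p : Fin G → ℕ)
    (A : Matrix ((g : Fin G) × Fin (p g)) ((g : Fin G) × Fin (p g)) ℝ) :
    ‖A‖ ≤ ‖(Matrix.of fun g h => ‖blockOf p A g h‖ : Matrix (Fin G) (Fin G) ℝ)‖ :=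
  -- `blockOf p A g h` unfolds to `A.submatrix (Sigma.mk g) (Sigma.mk h)`
  A.l2_opNorm_le_norm_normCompression
end

section
/- Let (Y1, Y2) be a bivariate Gaussian with mean zero, unit variances, and correlation ρ, and let S_{12} = (1/n) Σ_{i=1}^n Y1^{(i)} Y2^{(i)} be the sample covariance from n i.i.d. copies. Then for any x > 0, P(|S_{12} − ρ| ≥ x) ≤ 2 P(|W_n − n| ≥ n x), where W_n is a chi-squared random variable with n degrees of freedom. -/
/-!
With `U = (Y₁ + Y₂) / √(2(1 + ρ))` and `V = (Y₁ - Y₂) / √(2(1 - ρ))`, both standard Gaussian, one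
has `2 Y₁ Y₂ = (1 + ρ) U² - (1 - ρ) V²`. Summing over the sample,
`2n (S₁₂ - ρ) = (1 + ρ)(A - n) - (1 - ρ)(B - n)` with `A = Σ Uᵢ²` and `B = Σ Vᵢ²` both `χ²ₙ`.
The weights `1 ± ρ` are nonnegative and sum to `2`, so `|S₁₂ - ρ| ≥ x` forces `|A - n| ≥ n x` or
`|B - n| ≥ n x`, and a union bound gives the factor `2`.
-/

open MeasureTheory ProbabilityTheory

/-- The joint law of `n` i.i.d. standard Gaussians. -/
noncomputable def stdGaussianPi (n : ℕ) : Measure (Fin n → ℝ) :=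
  Measure.pi fun _ => gaussianReal 0 1

/-- The centered bivariate Gaussian law with unit variances and correlation `ρ`. -/
noncomputable def biGaussian (ρ : ℝ) : Measure (Fin 2 → ℝ) :=
  (stdGaussianPi 2).map fun z => ![z 0, ρ * z 0 + Real.sqrt (1 - ρ ^ 2) * z 1]

/-- The chi-squared distribution with `n` degrees of freedom. -/
noncomputable def chiSquared (n : ℕ) : Measure ℝ :=
  (stdGaussianPi n).map fun z => ∑ i, (z i) ^ 2

instance isProbabilityMeasure_stdGaussianPi (n : ℕ) : IsProbabilityMeasure (stdGaussianPi n) := by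
  unfold stdGaussianPi; infer_instance

lemma stdGaussianPi_two_map_linear (a b : ℝ) :
    (stdGaussianPi 2).map (fun z => a * z 0 + b * z 1)
      = gaussianReal 0 (a ^ 2 + b ^ 2).toNNReal := by
  have hpair : MeasurePreserving MeasurableEquiv.finTwoArrow (stdGaussianPi 2)
      ((gaussianReal 0 1).prod (gaussianReal 0 1)) := measurePreserving_finTwoArrow _
  have hcomp : (fun z : Fin 2 → ℝ => a * z 0 + b * z 1)
      = (fun p : ℝ × ℝ => p.1 + p.2) ∘ Prod.map (a * ·) (b * ·) ∘ MeasurableEquiv.finTwoArrow :=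
    rfl
  rw [hcomp, ← Measure.map_map (by fun_prop) (by fun_prop),
    ← Measure.map_map (by fun_prop) (by fun_prop), hpair.map_eq,
    ← Measure.map_prod_map _ _ (by fun_prop) (by fun_prop), gaussianReal_map_const_mul,
    gaussianReal_map_const_mul]
  -- the push-forward of a product measure under `+` is, by definition, a convolution
  refine gaussianReal_conv_gaussianReal.trans ?_
  congr 1
  · simp
  · ext; simp [Real.coe_toNNReal _ (by positivity : 0 ≤ a ^ 2 + b ^ 2)]

instance isProbabilityMeasure_biGaussian (ρ : ℝ) : IsProbabilityMeasure (biGaussian ρ) :=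
  Measure.isProbabilityMeasure_map (by fun_prop)

lemma biGaussian_map_linear {ρ : ℝ} (hρ : ρ ^ 2 ≤ 1) (a b : ℝ) :
    (biGaussian ρ).map (fun y => a * y 0 + b * y 1)
      = gaussianReal 0 (a ^ 2 + 2 * ρ * a * b + b ^ 2).toNNReal := by
  have hcomp : (fun y : Fin 2 → ℝ => a * y 0 + b * y 1)
      ∘ (fun z : Fin 2 → ℝ => ![z 0, ρ * z 0 + √(1 - ρ ^ 2) * z 1])
      = fun z => (a + b * ρ) * z 0 + (b * √(1 - ρ ^ 2)) * z 1 := by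
    funext z
    simp only [Function.comp, Matrix.cons_val_zero, Matrix.cons_val_one]
    ring
  rw [biGaussian, Measure.map_map (by fun_prop) (by fun_prop), hcomp,
    stdGaussianPi_two_map_linear, mul_pow, Real.sq_sqrt (by linarith)]
  ring_nf

/-- For `s = ±1` this is `(Y₁ ± Y₂) / √(2 (1 ± ρ))`. -/
noncomputable def normalizedSignedSum (ρ s : ℝ) (y : Fin 2 → ℝ) : ℝ :=
  (y 0 + s * y 1) / √(2 * (1 + s * ρ))

@[fun_prop]
lemma measurable_normalizedSignedSum (ρ s : ℝ) : Measurable (normalizedSignedSum ρ s) := by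
  unfold normalizedSignedSum; fun_prop

lemma biGaussian_map_normalizedSignedSum {ρ s : ℝ} (hρ : ρ ^ 2 ≤ 1) (hs : s ^ 2 = 1)
    (hsρ : 0 < 1 + s * ρ) :
    (biGaussian ρ).map (normalizedSignedSum ρ s) = gaussianReal 0 1 := by
  set c := √(2 * (1 + s * ρ))
  have hc : c ^ 2 = 2 * (1 + s * ρ) := Real.sq_sqrt (by linarith)
  have hc0 : c ≠ 0 := (Real.sqrt_pos.2 (by linarith)).ne'
  have hcomp : normalizedSignedSum ρ s = fun y => c⁻¹ * y 0 + (s * c⁻¹) * y 1 := by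
    funext y; simp only [normalizedSignedSum]; ring
  rw [hcomp, biGaussian_map_linear hρ]
  congr
  have : (c⁻¹) ^ 2 + 2 * ρ * c⁻¹ * (s * c⁻¹) + (s * c⁻¹) ^ 2 = 1 := by
    field_simp
    linear_combination hs - hc
  rw [this, Real.toNNReal_one]

lemma map_sum_sq_eq_chiSquared {Ω α : Type*} [MeasurableSpace Ω] [MeasurableSpace α]
    {P : Measure Ω} {ν : Measure α} {n : ℕ} {Y : Ω → Fin n → α} {f : α → ℝ}
    (hY : Measurable Y) (hf : Measurable f) (hlaw : P.map Y = Measure.pi fun _ => ν)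
    (hν : ν.map f = gaussianReal 0 1) :
    P.map (fun ω => ∑ i, f (Y ω i) ^ 2) = chiSquared n := by
  have : SigmaFinite (ν.map f) := hν ▸ inferInstance
  have hcomp : (fun ω => ∑ i, f (Y ω i) ^ 2)
      = (fun z : Fin n → ℝ => ∑ i, z i ^ 2) ∘ (fun y i => f (y i)) ∘ Y := rfl
  rw [hcomp, ← Measure.map_map (by fun_prop) (by fun_prop),
    ← Measure.map_map (by fun_prop) hY, hlaw, Measure.pi_map_pi fun _ => hf.aemeasurable, hν]
  rfl

lemma abs_mul_add_mul_le_mul_max_abs {a b u v : ℝ} (ha : 0 ≤ a) (hb : 0 ≤ b) :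
    |a * u + b * v| ≤ (a + b) * max |u| |v| := by
  calc |a * u + b * v| ≤ a * |u| + b * |v| := by
        simpa only [abs_mul, abs_of_nonneg ha, abs_of_nonneg hb] using abs_add_le (a * u) (b * v)
    _ ≤ a * max |u| |v| + b * max |u| |v| := by gcongr <;> simp
    _ = (a + b) * max |u| |v| := by ring

lemma two_mul_mul_eq_normalizedSignedSum_sq {ρ : ℝ} (hρl : -1 < ρ) (hρu : ρ < 1)
    (y : Fin 2 → ℝ) :
    2 * (y 0 * y 1) = (1 + ρ) * normalizedSignedSum ρ 1 y ^ 2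
      - (1 - ρ) * normalizedSignedSum ρ (-1) y ^ 2 := by
  simp only [normalizedSignedSum, div_pow, one_mul, neg_one_mul, ← sub_eq_add_neg]
  rw [Real.sq_sqrt (by linarith), Real.sq_sqrt (by linarith)]
  field_simp [(by linarith : 1 + ρ ≠ 0), (by linarith : 1 - ρ ≠ 0)]
  ring

lemma le_abs_sum_sq_sub_or_of_le_abs_sampleCov_sub {n : ℕ} {ρ x : ℝ} (hρl : -1 < ρ)
    (hρu : ρ < 1) (y : Fin n → Fin 2 → ℝ) (h : x ≤ |(1 / n : ℝ) * ∑ i, y i 0 * y i 1 - ρ|) :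
    n * x ≤ |∑ i, normalizedSignedSum ρ 1 (y i) ^ 2 - n|
      ∨ n * x ≤ |∑ i, normalizedSignedSum ρ (-1) (y i) ^ 2 - n| := by
  set A := ∑ i, normalizedSignedSum ρ 1 (y i) ^ 2
  set B := ∑ i, normalizedSignedSum ρ (-1) (y i) ^ 2
  have hsum : 2 * ∑ i, y i 0 * y i 1 = (1 + ρ) * A - (1 - ρ) * B := by
    simp only [A, B, Finset.mul_sum, ← Finset.sum_sub_distrib,
      two_mul_mul_eq_normalizedSignedSum_sq hρl hρu]
  have hscaled : 2 * n * ((1 / n : ℝ) * ∑ i, y i 0 * y i 1 - ρ)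
      = (1 + ρ) * (A - n) + (1 - ρ) * -(B - n) := by
    rcases Nat.eq_zero_or_pos n with rfl | hn
    · simp [A, B]
    · field_simp
      linear_combination hsum
  have hmax : n * x ≤ max |A - n| |-(B - n)| := by
    refine le_of_mul_le_mul_left ?_ (two_pos : (0 : ℝ) < 2)
    calc 2 * (n * x) ≤ 2 * n * |(1 / n : ℝ) * ∑ i, y i 0 * y i 1 - ρ| := by
          rw [← mul_assoc]; gcongr
      _ = |(1 + ρ) * (A - n) + (1 - ρ) * -(B - n)| := by
          rw [← hscaled, abs_mul, abs_of_nonneg (by positivity : (0 : ℝ) ≤ 2 * n)]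
      _ ≤ 2 * max |A - n| |-(B - n)| :=
          (abs_mul_add_mul_le_mul_max_abs (by linarith) (by linarith)).trans_eq (by ring)
  rwa [abs_neg, le_max_iff] at hmax

theorem sample_covariance_tail_general {Ω : Type*} [MeasureSpace Ω]
    [IsProbabilityMeasure (ℙ : Measure Ω)]
    (n : ℕ) (ρ : ℝ) (hρl : -1 < ρ) (hρu : ρ < 1)
    (Y : Ω → Fin n → Fin 2 → ℝ) (hY : Measurable Y)
    (hlaw : Measure.map Y ℙ = Measure.pi fun _ : Fin n => biGaussian ρ)
    (x : ℝ) :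
    ℙ {ω | x ≤ |(1 / n : ℝ) * ∑ i, Y ω i 0 * Y ω i 1 - ρ|}
      ≤ 2 * chiSquared n {w | (n : ℝ) * x ≤ |w - n|} := by
  set S : Set ℝ := {w | (n : ℝ) * x ≤ |w - n|}
  have hS : MeasurableSet S := measurableSet_le measurable_const (by fun_prop)
  have htail : ∀ s : ℝ, s ^ 2 = 1 → 0 < 1 + s * ρ →
      ℙ ((fun ω => ∑ i, normalizedSignedSum ρ s (Y ω i) ^ 2) ⁻¹' S) = chiSquared n S := by
    intro s hs hsρ
    rw [← map_sum_sq_eq_chiSquared hY (measurable_normalizedSignedSum ρ s) hlaw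
      (biGaussian_map_normalizedSignedSum (by nlinarith) hs hsρ),
      Measure.map_apply (by fun_prop) hS]
  calc ℙ {ω | x ≤ |(1 / n : ℝ) * ∑ i, Y ω i 0 * Y ω i 1 - ρ|}
      ≤ ℙ ((fun ω => ∑ i, normalizedSignedSum ρ 1 (Y ω i) ^ 2) ⁻¹' S
          ∪ (fun ω => ∑ i, normalizedSignedSum ρ (-1) (Y ω i) ^ 2) ⁻¹' S) :=
        measure_mono fun ω hω => le_abs_sum_sq_sub_or_of_le_abs_sampleCov_sub hρl hρu (Y ω) hω
    _ ≤ chiSquared n S + chiSquared n S := by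
        refine (measure_union_le _ _).trans_eq ?_
        rw [htail 1 (by norm_num) (by linarith), htail (-1) (by norm_num) (by linarith)]
    _ = 2 * chiSquared n S := (two_mul _).symm

/-- Tail bound for the sample covariance of a bivariate Gaussian in terms of
chi-squared tails: `P(|S₁₂ - ρ| ≥ x) ≤ 2 P(|Wₙ - n| ≥ n x)`. -/
theorem sample_covariance_tail {Ω : Type*} [MeasureSpace Ω]
    [IsProbabilityMeasure (ℙ : Measure Ω)]
    (n : ℕ) (hn : 0 < n) (ρ : ℝ) (hρl : -1 < ρ) (hρu : ρ < 1)
    (Y : Ω → Fin n → Fin 2 → ℝ) (hY : Measurable Y)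
    (hlaw : Measure.map Y ℙ = Measure.pi fun _ : Fin n => biGaussian ρ)
    (x : ℝ) (hx : 0 < x) :
    ℙ {ω | x ≤ |(1 / n : ℝ) * ∑ i, Y ω i 0 * Y ω i 1 - ρ|}
      ≤ 2 * chiSquared n {w | (n : ℝ) * x ≤ |w - n|} :=
  sample_covariance_tail_general n ρ hρl hρu Y hY hlaw x
end

section
/- Let Σ be a symmetric p×p matrix satisfying max_j Σ_{i: |i−j| ≥ k} |σ_{ij}| ≤ M k^{−α} for all k ≥ 1. Let B = I × J be an index block such that |i − j| ≥ d for all (i,j) ∈ B. Then the spectral norm of the submatrix Σ_B = (σ_{ij})_{i∈I, j∈J} satisfies ‖Σ_B‖ ≤ M d^{−α}. -/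
/-!
Schur test: Cauchy–Schwarz with weights `|aᵢⱼ|` gives `‖A‖² ≤ ‖A‖_{ℓ1} ‖A‖_{ℓ∞}`, the maximal
column and row absolute sums. Each column of the block `Σ_B` lies inside the tail at distance
`≥ d` of a column of `Σ`, and by symmetry so does each row; hence both sums are at most `M d^{-α}`.
-/

open scoped Matrix.Norms.L2Operator
open Finset

theorem norm_sum_mul_sq_le {𝕜 ι : Type*} [RCLike 𝕜] [Fintype ι] (a x : ι → 𝕜) :
    ‖∑ j, a j * x j‖ ^ 2 ≤ (∑ j, ‖a j‖) * ∑ j, ‖a j‖ * ‖x j‖ ^ 2 := by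
  calc ‖∑ j, a j * x j‖ ^ 2 ≤ (∑ j, ‖a j‖ * ‖x j‖) ^ 2 := by
        gcongr
        exact (norm_sum_le _ _).trans_eq (by simp_rw [norm_mul])
    _ ≤ _ := sum_sq_le_sum_mul_sum_of_sq_le_mul _ (fun _ _ => norm_nonneg _)
        (fun _ _ => by positivity) (fun _ _ => le_of_eq (by ring))

namespace Matrix

variable {𝕜 m n : Type*} [RCLike 𝕜] [Fintype m] [Fintype n] [DecidableEq n]

theorem l2_opNorm_le_sqrt_mul_of_sum_norm_le (A : Matrix m n 𝕜) {R C : ℝ} (hR : 0 ≤ R)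
    (hrow : ∀ i, ∑ j, ‖A i j‖ ≤ R) (hcol : ∀ j, ∑ i, ‖A i j‖ ≤ C) :
    ‖A‖ ≤ √(R * C) := by
  rw [l2_opNorm_def]
  refine ContinuousLinearMap.opNorm_le_bound _ (Real.sqrt_nonneg _) fun x => ?_
  have hsq : ‖toLpLin 2 2 A x‖ ^ 2 ≤ R * C * ‖x‖ ^ 2 := by
    simp only [EuclideanSpace.norm_sq_eq]
    calc ∑ i, ‖(toLpLin 2 2 A x) i‖ ^ 2
        ≤ ∑ i, (∑ j, ‖A i j‖) * ∑ j, ‖A i j‖ * ‖x j‖ ^ 2 :=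
          sum_le_sum fun i _ => norm_sum_mul_sq_le (A i) x
      _ ≤ ∑ i, R * ∑ j, ‖A i j‖ * ‖x j‖ ^ 2 := by gcongr with i; exact hrow i
      _ = R * ∑ j, (∑ i, ‖A i j‖) * ‖x j‖ ^ 2 := by
          rw [← mul_sum, sum_comm]; simp_rw [sum_mul]
      _ ≤ R * ∑ j, C * ‖x j‖ ^ 2 := by gcongr with j; exact hcol j
      _ = R * C * ∑ j, ‖x j‖ ^ 2 := by rw [← mul_sum, mul_assoc]
  calc ‖toLpLin 2 2 A x‖ ≤ √(R * C * ‖x‖ ^ 2) := Real.le_sqrt_of_sq_le hsq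
    _ = √(R * C) * ‖x‖ := by rw [Real.sqrt_mul' _ (by positivity), Real.sqrt_sq (norm_nonneg _)]

theorem l2_opNorm_le_of_sum_norm_le (A : Matrix m n 𝕜) {C : ℝ} (hC : 0 ≤ C)
    (hrow : ∀ i, ∑ j, ‖A i j‖ ≤ C) (hcol : ∀ j, ∑ i, ‖A i j‖ ≤ C) : ‖A‖ ≤ C :=
  (A.l2_opNorm_le_sqrt_mul_of_sum_norm_le hC hrow hcol).trans_eq (Real.sqrt_mul_self hC)

end Matrix

theorem sum_abs_apply_le_sum_filter_le_natAbs {p d : ℕ} (S : Matrix (Fin p) (Fin p) ℝ)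
    (I : Finset (Fin p)) (j : Fin p) (hI : ∀ i ∈ I, d ≤ ((i : ℤ) - (j : ℤ)).natAbs) :
    ∑ i : I, |S i j| ≤
      ∑ i ∈ univ.filter (fun i : Fin p => d ≤ ((i : ℤ) - (j : ℤ)).natAbs), |S i j| := by
  rw [sum_coe_sort I fun i => |S i j|]
  exact sum_le_sum_of_subset_of_nonneg (fun i hi => by simpa using hI i hi)
    fun _ _ _ => abs_nonneg _

theorem bandable_block_norm_general (p : ℕ) (M α : ℝ) (hM : 0 < M)
    (S : Matrix (Fin p) (Fin p) ℝ) (hsymm : S.IsSymm)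
    (hband : ∀ k : ℕ, 1 ≤ k → ∀ j : Fin p,
      ∑ i ∈ Finset.univ.filter (fun i : Fin p => k ≤ ((i : ℤ) - (j : ℤ)).natAbs),
        |S i j| ≤ M * (k : ℝ) ^ (-α))
    (I J : Finset (Fin p)) (d : ℕ) (hd : 1 ≤ d)
    (hdist : ∀ i ∈ I, ∀ j ∈ J, d ≤ ((i : ℤ) - (j : ℤ)).natAbs) :
    ‖(Matrix.of fun (i : I) (j : J) => S i j : Matrix I J ℝ)‖ ≤ M * (d : ℝ) ^ (-α) := by
  refine Matrix.l2_opNorm_le_of_sum_norm_le _ (by positivity) (fun i => ?_) (fun j => ?_)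
  · simp only [Matrix.of_apply, Real.norm_eq_abs, ← hsymm.apply i]
    refine (sum_abs_apply_le_sum_filter_le_natAbs S J i fun j hj => ?_).trans (hband d hd i)
    rw [← Int.natAbs_neg, neg_sub]
    exact hdist i i.2 j hj
  · simp only [Matrix.of_apply, Real.norm_eq_abs]
    exact (sum_abs_apply_le_sum_filter_le_natAbs S I j fun i hi => hdist i hi j j.2).trans
      (hband d hd j)

/-- For a symmetric bandable matrix, a block whose index pairs are all at distance
at least `d` from the diagonal has spectral norm at most `M d^{-α}`. -/
theorem bandable_block_norm (p : ℕ) (M α : ℝ) (hM : 0 < M) (hα : 0 < α)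
    (S : Matrix (Fin p) (Fin p) ℝ) (hsymm : S.IsSymm)
    (hband : ∀ k : ℕ, 1 ≤ k → ∀ j : Fin p,
      ∑ i ∈ Finset.univ.filter (fun i : Fin p => k ≤ ((i : ℤ) - (j : ℤ)).natAbs),
        |S i j| ≤ M * (k : ℝ) ^ (-α))
    (I J : Finset (Fin p)) (d : ℕ) (hd : 1 ≤ d)
    (hdist : ∀ i ∈ I, ∀ j ∈ J, d ≤ ((i : ℤ) - (j : ℤ)).natAbs) :
    ‖(Matrix.of fun (i : I) (j : J) => S i j : Matrix I J ℝ)‖ ≤ M * (d : ℝ) ^ (-α) :=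
  bandable_block_norm_general p M α hM S hsymm hband I J d hd hdist
end
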